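/- arXiv:2501.16163 — 6 statements merged into one kernel-verified Lean document; each statement's English description precedes it below -/
import Mathlib

section
/- Let (g, ·) be a left Leibniz algebra. Define [x,y] := x·y − y·x and ⟦x,y,z⟧ := −(x·y)·z. Then (g, [,], ⟦,,⟧) is a Lie–Yamaguti algebra, i.e. it satisfies: (LY01) [x,y] = −[y,x]; (LY02) ⟦x,y,z⟧ = −⟦y,x,z⟧; (LY1) the cyclic sum over x,y,z of ([[x,y],z] + ⟦x,y,z⟧) vanishes; (LY2) the cyclic sum over x,y,z of ⟦[x,y],z,u⟧ vanishes; (LY3) ⟦x,y,[u,v]⟧ = [⟦x,y,u⟧,v] + [u,⟦x,y,v⟧]; (LY4) ⟦x,y,⟦u,v,w⟧⟧ = ⟦⟦x,y,u⟧,v,w⟧ + ⟦u,⟦x,y,v⟧,w⟧ + ⟦u,v,⟦x,y,w⟧⟧. -/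
theorem stmt1 (K : Type*) [Field K] [CharZero K]
    (g : Type*) [AddCommGroup g] [Module K g]
    (mul : g →ₗ[K] g →ₗ[K] g)
    (leib : ∀ x y z : g, mul x (mul y z) = mul (mul x y) z + mul y (mul x z))
    (br : g → g → g) (hbr : ∀ x y, br x y = mul x y - mul y x)
    (tr : g → g → g → g) (htr : ∀ x y z, tr x y z = -(mul (mul x y) z)) :
    (∀ x y, br x y = -br y x) ∧
    (∀ x y z, tr x y z = -tr y x z) ∧
    (∀ x y z, (br (br x y) z + tr x y z) + (br (br y z) x + tr y z x) +
      (br (br z x) y + tr z x y) = 0) ∧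
    (∀ x y z u, tr (br x y) z u + tr (br y z) x u + tr (br z x) y u = 0) ∧
    (∀ x y u v, tr x y (br u v) = br (tr x y u) v + br u (tr x y v)) ∧
    (∀ x y u v w, tr x y (tr u v w) =
      tr (tr x y u) v w + tr u (tr x y v) w + tr u v (tr x y w)) := by
  have h3 : ∀ a b c : g, mul (mul a b) c = mul a (mul b c) - mul b (mul a c) := by
    intro a b c
    rw [eq_sub_iff_add_eq]
    exact (leib a b c).symm
  refine ⟨?_, ?_, ?_, ?_, ?_, ?_⟩
  · intro x y
    simp only [hbr]; abel
  · intro x y z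
    simp only [htr, h3, map_sub, map_add, map_neg, LinearMap.sub_apply,
      LinearMap.add_apply, LinearMap.neg_apply]
    abel
  · intro x y z
    simp only [hbr, htr, h3, map_sub, map_add, map_neg, LinearMap.sub_apply,
      LinearMap.add_apply, LinearMap.neg_apply]
    abel
  · intro x y z u
    simp only [hbr, htr, h3, map_sub, map_add, map_neg, LinearMap.sub_apply,
      LinearMap.add_apply, LinearMap.neg_apply]
    abel
  · intro x y u v
    simp only [hbr, htr, h3, map_sub, map_add, map_neg, LinearMap.sub_apply,
      LinearMap.add_apply, LinearMap.neg_apply]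
    abel
  · intro x y u v w
    simp only [hbr, htr, h3, map_sub, map_add, map_neg, LinearMap.sub_apply,
      LinearMap.add_apply, LinearMap.neg_apply]
    abel
end

section
/- Let (g, ·) be a left Leibniz algebra and (V, l, r) a left representation of it. Define l*(x)ξ := −ξ∘l(x) and r*(x)ξ := −ξ∘r(x) on the dual space V*. Then (V*, l*, −l* − r*) is a left representation of (g, ·). -/
theorem stmt2 (K : Type*) [Field K]
    (g V : Type*) [AddCommGroup g] [Module K g] [AddCommGroup V] [Module K V]
    (mul : g →ₗ[K] g →ₗ[K] g)
    (leib : ∀ x y z : g, mul x (mul y z) = mul (mul x y) z + mul y (mul x z))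
    (l r : g →ₗ[K] Module.End K V)
    (h1 : ∀ x y, l (mul x y) = l x * l y - l y * l x)
    (h2 : ∀ x y, r (mul x y) = r y * r x + l x * r y)
    (h3 : ∀ x y, r (mul x y) = l x * r y - r y * l x)
    (ls rs : g →ₗ[K] Module.End K (Module.Dual K V))
    (hls : ∀ (x : g) (ξ : Module.Dual K V), ls x ξ = -(ξ ∘ₗ l x))
    (hrs : ∀ (x : g) (ξ : Module.Dual K V), rs x ξ = -(ξ ∘ₗ r x)) :
    (∀ x y, ls (mul x y) = ls x * ls y - ls y * ls x) ∧
    (∀ x y, -ls (mul x y) - rs (mul x y) =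
      (-ls y - rs y) * (-ls x - rs x) + ls x * (-ls y - rs y)) ∧
    (∀ x y, -ls (mul x y) - rs (mul x y) =
      ls x * (-ls y - rs y) - (-ls y - rs y) * ls x) := by
  have hr : ∀ x y : g, ∀ v : V, r y (r x v) = -(r y (l x v)) := by
    intro x y v
    have := congrArg (fun f : Module.End K V => f v) ((h2 x y).symm.trans (h3 x y))
    simp only [Module.End.mul_apply, LinearMap.add_apply, LinearMap.sub_apply] at this
    rw [sub_eq_add_neg, add_comm] at this
    exact add_left_cancel this
  refine ⟨?_, ?_, ?_⟩ <;> intro x y <;> ext ξ v <;>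
    simp only [Module.End.mul_apply, LinearMap.sub_apply, LinearMap.add_apply,
      LinearMap.neg_apply, hls, hrs, LinearMap.comp_apply, h1, h2, h3,
      hr, map_neg, map_sub, map_add] <;>
    abel
end

section
/- Let (g, ·) be a left Leibniz algebra with left representation (V, l, r). Define ρ(x) := l(x) − r(x), θ(x,y) := −r(y)∘r(x), and [x,y] := x·y − y·x. Then θ([x,y], z) = θ(x,z)∘ρ(y) − θ(y,z)∘ρ(x) for all x, y, z ∈ g. -/
theorem stmt5 (K : Type*) [Field K]
    (g V : Type*) [AddCommGroup g] [Module K g] [AddCommGroup V] [Module K V]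
    (mul : g →ₗ[K] g →ₗ[K] g)
    (leib : ∀ x y z : g, mul x (mul y z) = mul (mul x y) z + mul y (mul x z))
    (l r : g →ₗ[K] Module.End K V)
    (h1 : ∀ x y, l (mul x y) = l x * l y - l y * l x)
    (h2 : ∀ x y, r (mul x y) = r y * r x + l x * r y)
    (h3 : ∀ x y, r (mul x y) = l x * r y - r y * l x) :
    ∀ x y z : g,
      -(r z * r (mul x y - mul y x)) =
        (-(r z * r x)) * (l y - r y) - (-(r z * r y)) * (l x - r x) := by
  have key : ∀ a b : g, r b * l a = -(r b * r a) := by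
    intro a b
    have h := (h2 a b).symm.trans (h3 a b)
    -- r b * r a + l a * r b = l a * r b - r b * l a
    linear_combination (norm := noncomm_ring) h
  intro x y z
  rw [map_sub, h2 x y, h2 y x]
  linear_combination (norm := noncomm_ring)
    (-(key x z)) * r y + (key y z) * r x + r z * (key y x) - r z * (key x y)
end

section
/- Let (g, ·) be a left Leibniz algebra with left representation (V, l, r). Define θ(x,y) := −r(y)∘r(x), D(u,v) := −l(u·v), and ⟦u,v,x⟧ := −(u·v)·x. Then [D(u,v), θ(x,y)] = θ(⟦u,v,x⟧, y) + θ(x, ⟦u,v,y⟧) for all u, v, x, y ∈ g, where [A, B] := A∘B − B∘A. -/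
theorem stmt8 (K : Type*) [Field K]
    (g V : Type*) [AddCommGroup g] [Module K g] [AddCommGroup V] [Module K V]
    (mul : g →ₗ[K] g →ₗ[K] g)
    (leib : ∀ x y z : g, mul x (mul y z) = mul (mul x y) z + mul y (mul x z))
    (l r : g →ₗ[K] Module.End K V)
    (h1 : ∀ x y, l (mul x y) = l x * l y - l y * l x)
    (h2 : ∀ x y, r (mul x y) = r y * r x + l x * r y)
    (h3 : ∀ x y, r (mul x y) = l x * r y - r y * l x) :
    ∀ u v x y : g,
      (-l (mul u v)) * (-(r y * r x)) - (-(r y * r x)) * (-l (mul u v)) =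
        (-(r y * r (-(mul (mul u v) x)))) + (-(r (-(mul (mul u v) y)) * r x)) := by
  intro u v x y
  rw [map_neg, map_neg, h3 (mul u v) x, h3 (mul u v) y]
  noncomm_ring
end

section
/- Let (g, ·) be a left Leibniz algebra with left representation (V, l, r). Define θ(x,y) := −r(y)∘r(x), D(x,y) := −l(x·y), and ⟦x,y,z⟧ := −(x·y)·z. Then θ(u, ⟦x,y,z⟧) = θ(y,z)∘θ(u,x) − θ(x,z)∘θ(u,y) + D(x,y)∘θ(u,z) for all u, x, y, z ∈ g. -/
theorem stmt9 (K : Type*) [Field K]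
    (g V : Type*) [AddCommGroup g] [Module K g] [AddCommGroup V] [Module K V]
    (mul : g →ₗ[K] g →ₗ[K] g)
    (leib : ∀ x y z : g, mul x (mul y z) = mul (mul x y) z + mul y (mul x z))
    (l r : g →ₗ[K] Module.End K V)
    (h1 : ∀ x y, l (mul x y) = l x * l y - l y * l x)
    (h2 : ∀ x y, r (mul x y) = r y * r x + l x * r y)
    (h3 : ∀ x y, r (mul x y) = l x * r y - r y * l x) :
    ∀ u x y z : g,
      -(r (-(mul (mul x y) z)) * r u) =
        (-(r z * r y)) * (-(r x * r u)) - (-(r z * r x)) * (-(r y * r u))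
          + (-l (mul x y)) * (-(r z * r u)) := by
  intro u x y z
  have key : ∀ a b : g, r b * l a = -(r b * r a) := by
    intro a b
    have h := (h2 a b).symm.trans (h3 a b)
    -- h : r b * r a + l a * r b = l a * r b - r b * l a
    have h' : l a * r b + (r b * r a) = l a * r b + -(r b * l a) := by
      rw [← sub_eq_add_neg, ← h]; abel
    have := add_left_cancel h'
    have h2' := congrArg Neg.neg this
    simp only [neg_neg] at h2'
    exact h2'.symm
  rw [map_neg, h2 (mul x y) z, h2 x y]
  have k := key x z
  noncomm_ring
  simp only [← mul_assoc]
  rw [k]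
  noncomm_ring
end

section
/- Let (g, ·) be a left Leibniz algebra, (g, [,], ⟦,,⟧) its associated Lie–Yamaguti algebra with [x,y] := x·y − y·x and ⟦x,y,z⟧ := −(x·y)·z, and (V, l, r) a left representation of (g, ·). Define ρ(x) := l(x) − r(x), θ(x,y) := −r(y)∘r(x), and D(x,y) := −l(x·y). Then (V, ρ, θ, D) is a representation of the Lie–Yamaguti algebra (g, [,], ⟦,,⟧), i.e. it satisfies the seven axioms (R1)–(R7). -/
theorem stmt10 (K : Type*) [Field K]
    (g V : Type*) [AddCommGroup g] [Module K g] [AddCommGroup V] [Module K V]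
    (mul : g →ₗ[K] g →ₗ[K] g)
    (leib : ∀ x y z : g, mul x (mul y z) = mul (mul x y) z + mul y (mul x z))
    (l r : g →ₗ[K] Module.End K V)
    (h1 : ∀ x y, l (mul x y) = l x * l y - l y * l x)
    (h2 : ∀ x y, r (mul x y) = r y * r x + l x * r y)
    (h3 : ∀ x y, r (mul x y) = l x * r y - r y * l x)
    (br : g → g → g) (hbr : ∀ x y, br x y = mul x y - mul y x)
    (tr : g → g → g → g) (htr : ∀ x y z, tr x y z = -(mul (mul x y) z))
    (ρ : g → Module.End K V) (hρ : ∀ x, ρ x = l x - r x)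
    (θ : g → g → Module.End K V) (hθ : ∀ x y, θ x y = -(r y * r x))
    (D : g → g → Module.End K V) (hD : ∀ x y, D x y = -l (mul x y)) :
    (∀ x y, D x y - θ y x + θ x y + ρ (br x y) - (ρ x * ρ y - ρ y * ρ x) = 0) ∧
    (∀ x y z, D (br x y) z + D (br y z) x + D (br z x) y = 0) ∧
    (∀ x y z, θ (br x y) z = θ x z * ρ y - θ y z * ρ x) ∧
    (∀ x y z, D x y * ρ z - ρ z * D x y = ρ (tr x y z)) ∧
    (∀ x y z, θ x (br y z) = ρ y * θ x z - ρ z * θ x y) ∧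
    (∀ u v x y, D u v * θ x y - θ x y * D u v = θ (tr u v x) y + θ x (tr u v y)) ∧
    (∀ u x y z, θ u (tr x y z) =
      θ y z * θ u x - θ x z * θ u y + D x y * θ u z) := by
  have key : ∀ x y, r y * r x = -(r y * l x) := by
    intro x y
    have h : l x * r y - r y * l x = r y * r x + l x * r y := by rw [← h2, ← h3]
    have h' : r y * r x + r y * l x = 0 := by
      have e : (l x * r y - r y * l x) - (r y * r x + l x * r y) = 0 := by rw [h]; abel
      calc r y * r x + r y * l x
          = -((l x * r y - r y * l x) - (r y * r x + l x * r y)) := by abel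
        _ = 0 := by rw [e]; exact neg_zero
    exact eq_neg_of_add_eq_zero_left h'
  have key' : ∀ (x y : g) (A : Module.End K V), r y * (r x * A) = -(r y * (l x * A)) := by
    intro x y A
    rw [← mul_assoc, ← mul_assoc, key, neg_mul]
  have keyE : ∀ (a b : g), r a * l b = -(r a * r b) := by
    intro a b
    rw [key]; exact (neg_neg _).symm
  have Z0 : ∀ (a x : g), r a * l x + r a * r x = 0 := by
    intro a x
    rw [key]; abel
  have Z1 : ∀ (z y x : g), r z * (l y * l x) + r z * (l y * r x) = 0 := by
    intro z y x
    have e1 := Z0 (mul y z) x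
    rw [h3] at e1
    have e2 : l y * (r z * l x) + l y * (r z * r x) = 0 := by
      rw [← mul_add, Z0, mul_zero]
    have e3 : r z * (l y * l x) + r z * (l y * r x) =
        (l y * (r z * l x) + l y * (r z * r x)) -
        ((l y * r z - r z * l y) * l x + (l y * r z - r z * l y) * r x) := by
      simp only [sub_mul, mul_assoc]; abel
    rw [e3, e1, e2]; abel
  have Z1c : ∀ (z y x : g) (A : Module.End K V),
      r z * (l y * (l x * A)) + r z * (l y * (r x * A)) = 0 := by
    intro z y x A
    have := congrArg (· * A) (Z1 z y x)
    simpa [add_mul, mul_assoc] using this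
  refine ⟨?_, ?_, ?_, ?_, ?_, ?_, ?_⟩
  · intros x y
    simp only [hD, hθ, hρ, hbr, htr, map_sub, map_neg, map_add, map_smul,
      LinearMap.add_apply, LinearMap.sub_apply, LinearMap.neg_apply, LinearMap.smul_apply,
      h1, h3, sub_mul, mul_sub, add_mul, mul_add, neg_mul, mul_neg, mul_assoc, key, key',
      neg_neg, neg_smul, one_smul, smul_neg]
    abel
  · intros x y z
    simp only [hD, hθ, hρ, hbr, htr, map_sub, map_neg, map_add, map_smul,
      LinearMap.add_apply, LinearMap.sub_apply, LinearMap.neg_apply, LinearMap.smul_apply,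
      h1, h3, sub_mul, mul_sub, add_mul, mul_add, neg_mul, mul_neg, mul_assoc, key, key',
      neg_neg, neg_smul, one_smul, smul_neg]
    abel
  · intros x y z
    simp only [hD, hθ, hρ, hbr, htr, map_sub, map_neg, map_add, map_smul,
      LinearMap.add_apply, LinearMap.sub_apply, LinearMap.neg_apply, LinearMap.smul_apply,
      h1, h3, sub_mul, mul_sub, add_mul, mul_add, neg_mul, mul_neg, mul_assoc, key, key',
      neg_neg, neg_smul, one_smul, smul_neg]
    abel
  · intros x y z
    simp only [hD, hθ, hρ, hbr, htr, map_sub, map_neg, map_add, map_smul,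
      LinearMap.add_apply, LinearMap.sub_apply, LinearMap.neg_apply, LinearMap.smul_apply,
      h1, h3, sub_mul, mul_sub, add_mul, mul_add, neg_mul, mul_neg, mul_assoc, key, key',
      neg_neg, neg_smul, one_smul, smul_neg]
    abel
  · intros x y z
    simp only [hD, hθ, hρ, hbr, htr, map_sub, map_neg, map_add, map_smul,
      LinearMap.add_apply, LinearMap.sub_apply, LinearMap.neg_apply, LinearMap.smul_apply,
      h1, h3, sub_mul, mul_sub, add_mul, mul_add, neg_mul, mul_neg, mul_assoc, key, key',
      neg_neg, neg_smul, one_smul, smul_neg]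
    rw [← sub_eq_zero,
      show (0 : Module.End K V) =
        (r z * (l y * l x) + r z * (l y * r x)) -
        (r y * (l z * l x) + r y * (l z * r x)) from by rw [Z1, Z1]; abel]
    abel
  · intros u v x y
    simp only [hD, hθ, hρ, hbr, htr, map_sub, map_neg, map_add, map_smul,
      LinearMap.add_apply, LinearMap.sub_apply, LinearMap.neg_apply, LinearMap.smul_apply,
      h1, h3, sub_mul, mul_sub, add_mul, mul_add, neg_mul, mul_neg, mul_assoc, key, key',
      neg_neg, neg_smul, one_smul, smul_neg]
    abel
  · intros u x y z
    simp only [hD, hθ, hρ, hbr, htr, map_sub, map_neg, map_add, map_smul,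
      LinearMap.add_apply, LinearMap.sub_apply, LinearMap.neg_apply, LinearMap.smul_apply,
      h1, h3, sub_mul, mul_sub, add_mul, mul_add, neg_mul, mul_neg, mul_assoc, key, key',
      neg_neg, neg_smul, one_smul, smul_neg]
    simp only [keyE, mul_neg, neg_neg]
    rw [← sub_eq_zero,
      show (0 : Module.End K V) =
        (r z * (l y * (l x * r u)) + r z * (l y * (r x * r u))) -
        (r z * (l x * (l y * r u)) + r z * (l x * (r y * r u))) from by rw [Z1c, Z1c]; abel]
    abel
end
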